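/- Let T be the subgroup of the symmetric group on {0,...,11} generated by a = (0,7,11)(1,5,6)(2,9,10)(3,4,8) and b = (0,4,2)(1,5,9)(3,7,11)(6,10,8), let c = (ab)^{-1}, and let U be the subgroup { id, (1,7)(4,10), (2,8)(5,11), (1,7)(2,8)(4,10)(5,11), (0,9)(2,11,8,5)(3,6)(4,10), (0,9)(1,7)(2,11,8,5)(3,6), (0,9)(2,5,8,11)(3,6)(4,10), (0,9)(1,7)(2,5,8,11)(3,6) }. Then for every r with 1 ≤ r ≤ 2 no element of U is conjugate in T to a^r or to b^r, and for every r with 1 ≤ r ≤ 5 no element of U is conjugate in T to c^r. -/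

import Mathlib

/-- `a = (0,7,11)(1,5,6)(2,9,10)(3,4,8)` as a permutation of `{0,…,11}`. -/
def a : Equiv.Perm (Fin 12) := c[0, 7, 11] * c[1, 5, 6] * c[2, 9, 10] * c[3, 4, 8]

/-- `b = (0,4,2)(1,5,9)(3,7,11)(6,10,8)` as a permutation of `{0,…,11}`. -/
def b : Equiv.Perm (Fin 12) := c[0, 4, 2] * c[1, 5, 9] * c[3, 7, 11] * c[6, 10, 8]

/-- `T` is the subgroup of the symmetric group on 12 letters generated by `a` and `b`. -/
def T : Subgroup (Equiv.Perm (Fin 12)) := Subgroup.closure {a, b}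

/-- The set `U` of eight permutations. -/
def Uset : Set (Equiv.Perm (Fin 12)) :=
  {1, c[1,7] * c[4,10], c[2,8] * c[5,11], c[1,7] * c[2,8] * c[4,10] * c[5,11],
   c[0,9] * c[2,11,8,5] * c[3,6] * c[4,10], c[0,9] * c[1,7] * c[2,11,8,5] * c[3,6],
   c[0,9] * c[2,5,8,11] * c[3,6] * c[4,10], c[0,9] * c[1,7] * c[2,5,8,11] * c[3,6]}

/-- `c = (ab)⁻¹`. -/
def cp : Equiv.Perm (Fin 12) := (a * b)⁻¹

/-! Conjugation carries fixed points to fixed points. Every element of `U` fixes a point of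
`{0,…,11}`, whereas `a`, `a²`, `b`, `b²` and `cʳ` for `1 ≤ r ≤ 5` move every point, so none
of them is conjugate to an element of `U` even in the full symmetric group. -/

lemma Equiv.Perm.conj_ne_of_fixedPoint {α : Type*} {g u : Equiv.Perm α}
    (hg : ∀ x, g x ≠ x) {x : α} (hu : u x = x) (t : Equiv.Perm α) : t * g * t⁻¹ ≠ u := by
  rintro rfl
  exact hg (t⁻¹ x) (by simpa [eq_inv_iff_eq] using congrArg (⇑t⁻¹) hu)

lemma exists_fixedPoint_of_mem_Uset {u : Equiv.Perm (Fin 12)} (hu : u ∈ Uset) :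
    ∃ x, u x = x := by
  simp only [Uset, Set.mem_insert_iff, Set.mem_singleton_iff] at hu
  rcases hu with rfl | rfl | rfl | rfl | rfl | rfl | rfl | rfl <;> decide

lemma not_conj_eq_of_mem_Uset {g u : Equiv.Perm (Fin 12)} (hg : ∀ x, g x ≠ x) (hu : u ∈ Uset) :
    ¬ ∃ t ∈ T, t * g * t⁻¹ = u := by
  rintro ⟨t, -, h⟩
  obtain ⟨x, hx⟩ := exists_fixedPoint_of_mem_Uset hu
  exact Equiv.Perm.conj_ne_of_fixedPoint hg hx t h

/-- No element of `U` is conjugate in `T` to `aʳ` or `bʳ` for `1 ≤ r ≤ 2`, nor to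
`cʳ` for `1 ≤ r ≤ 5`, where `c = (ab)⁻¹`. -/
theorem stmt_6 :
    (∀ r : ℕ, 1 ≤ r → r ≤ 2 → ∀ u ∈ Uset,
      (¬ ∃ t ∈ T, t * a ^ r * t⁻¹ = u) ∧ (¬ ∃ t ∈ T, t * b ^ r * t⁻¹ = u)) ∧
    (∀ r : ℕ, 1 ≤ r → r ≤ 5 → ∀ u ∈ Uset, ¬ ∃ t ∈ T, t * cp ^ r * t⁻¹ = u) := by
  refine ⟨fun r hr1 hr2 u hu => ?_, fun r hr1 hr5 u hu => ?_⟩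
  · interval_cases r <;>
      exact ⟨not_conj_eq_of_mem_Uset (by decide) hu, not_conj_eq_of_mem_Uset (by decide) hu⟩
  · interval_cases r <;>
      exact not_conj_eq_of_mem_Uset (by set_option maxRecDepth 100000 in decide) hu
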